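/- arXiv:1407.5394 — 7 statements merged into one kernel-verified Lean document; each statement's English description precedes it below -/
import Mathlib

section
/- Let X be a topological space whose diagonal Δ = {(x,x) : x ∈ X} is a regular G_δ-set in X × X, and let E be a B₁-retract of X. Then E is a G_δ-set in X. -/
/-- A function between topological spaces is *Baire-one* if it is a pointwise limit of a
sequence of continuous functions. -/
def IsBaireOne {X Y : Type*} [TopologicalSpace X] [TopologicalSpace Y] (f : X → Y) : Prop :=
  ∃ g : ℕ → X → Y, (∀ n, Continuous (g n)) ∧
    ∀ x, Filter.Tendsto (fun n => g n x) Filter.atTop (nhds (f x))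

/-- A subset `E` of a topological space `X` is a *B₁-retract* of `X` if there exists a
Baire-one function `r : X → E` such that `r x = x` for all `x ∈ E`. -/
def IsB1Retract {X : Type*} [TopologicalSpace X] (E : Set X) : Prop :=
  ∃ r : X → E, IsBaireOne r ∧ ∀ x (hx : x ∈ E), (r x : X) = x

/-- A subset `A` of a topological space is a *regular Gδ-set* if there is a sequence of open
sets `Gₙ` with `A = ⋂ₙ Gₙ = ⋂ₙ closure Gₙ`. -/
def IsRegularGdelta {Z : Type*} [TopologicalSpace Z] (A : Set Z) : Prop :=
  ∃ G : ℕ → Set Z, (∀ n, IsOpen (G n)) ∧ A = ⋂ n, G n ∧ A = ⋂ n, closure (G n)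

/-!
If `fₙ → f` pointwise with `fₙ` continuous and `A = ⋂ₖ Gₖ = ⋂ₖ closure Gₖ`, then `f x ∈ A` iff for
every `k` infinitely many `fₙ x` lie in `Gₖ`: openness of `Gₖ` gives one direction, the closures
the other. This exhibits `f ⁻¹' A` as a Gδ-set. For a B₁-retraction `r` onto `E`, apply this to
`x ↦ (r x, x)` and the diagonal, whose preimage is exactly `E`.
-/

open Filter Set

section

variable {X Y Z : Type*} [TopologicalSpace X] [TopologicalSpace Y] [TopologicalSpace Z]

theorem Continuous.isBaireOne {f : X → Y} (hf : Continuous f) : IsBaireOne f :=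
  ⟨fun _ => f, fun _ => hf, fun _ => tendsto_const_nhds⟩

theorem Continuous.comp_isBaireOne {g : Y → Z} {f : X → Y} (hg : Continuous g)
    (hf : IsBaireOne f) : IsBaireOne (g ∘ f) := by
  obtain ⟨u, hu, hlim⟩ := hf
  exact ⟨fun n => g ∘ u n, fun n => hg.comp (hu n), fun x => (hg.tendsto _).comp (hlim x)⟩

theorem IsBaireOne.prodMk {f : X → Y} {g : X → Z} (hf : IsBaireOne f) (hg : IsBaireOne g) :
    IsBaireOne fun x => (f x, g x) := by
  obtain ⟨u, hu, hulim⟩ := hf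
  obtain ⟨v, hv, hvlim⟩ := hg
  exact ⟨fun n x => (u n x, v n x), fun n => (hu n).prodMk (hv n),
    fun x => (hulim x).prodMk_nhds (hvlim x)⟩

theorem isGδ_setOf_frequently_mem {u : ℕ → X → Y} (hu : ∀ n, Continuous (u n)) {U : Set Y}
    (hU : IsOpen U) : IsGδ {x | ∃ᶠ n in atTop, u n x ∈ U} := by
  have hset : {x | ∃ᶠ n in atTop, u n x ∈ U} = ⋂ N, ⋃ n, ⋃ _ : N ≤ n, u n ⁻¹' U := by
    ext x
    simp only [frequently_atTop, mem_ofPred_eq, mem_iInter, mem_iUnion, mem_preimage, exists_prop]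
  rw [hset]
  exact .iInter fun N => (isOpen_iUnion fun n => isOpen_iUnion fun _ =>
    hU.preimage (hu n)).isGδ

theorem IsBaireOne.isGδ_preimage {f : X → Y} (hf : IsBaireOne f) {A : Set Y}
    (hA : IsRegularGdelta A) : IsGδ (f ⁻¹' A) := by
  obtain ⟨u, hu, hlim⟩ := hf
  obtain ⟨G, hGopen, hA_iInter, hA_iInter_closure⟩ := hA
  have hset : f ⁻¹' A = ⋂ k, {x | ∃ᶠ n in atTop, u n x ∈ G k} := by
    refine Subset.antisymm (fun x hx => mem_iInter.2 fun k => ?_) fun x hx => ?_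
    · have hxk : f x ∈ G k := by
        rw [mem_preimage, hA_iInter] at hx
        exact mem_iInter.1 hx k
      exact ((hlim x).eventually ((hGopen k).mem_nhds hxk)).frequently
    · rw [mem_preimage, hA_iInter_closure, mem_iInter]
      exact fun k => mem_closure_of_frequently_of_tendsto (mem_iInter.1 hx k) (hlim x)
  rw [hset]
  exact .iInter fun k => isGδ_setOf_frequently_mem hu (hGopen k)

end

theorem isGdelta_of_b1_retract_of_regular_gdelta_diagonal {X : Type*} [TopologicalSpace X]
    (hdiag : IsRegularGdelta (Set.diagonal X)) (E : Set X) (hE : IsB1Retract E) :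
    IsGδ E := by
  obtain ⟨r, hr, hr_fix⟩ := hE
  have hE_eq : E = (fun x => ((r x : X), x)) ⁻¹' diagonal X := by
    ext x
    refine ⟨hr_fix x, fun hx => ?_⟩
    rw [← show (r x : X) = x from hx]
    exact (r x).2
  rw [hE_eq]
  exact ((continuous_subtype_val.comp_isBaireOne hr).prodMk continuous_id.isBaireOne).isGδ_preimage
    hdiag
end

section
/- Let X and Z be topological spaces, let (G_m) be a decreasing sequence of open sets in Z with A = ⋂_m G_m = ⋂_m closure(G_m), let h_n : X → Z be continuous functions converging pointwise to h : X → Z. Then h⁻¹(A) = ⋂_{m=1}^∞ ⋃_{n=m}^∞ h_n⁻¹(G_m). -/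
theorem preimage_regular_gdelta_eq_iInter_iUnion {X Z : Type*} [TopologicalSpace X]
    [TopologicalSpace Z] (G : ℕ → Set Z) (hGopen : ∀ m, IsOpen (G m)) (hGdec : Antitone G)
    (A : Set Z) (hA₁ : A = ⋂ m, G m) (hA₂ : A = ⋂ m, closure (G m))
    (h : X → Z) (hseq : ℕ → X → Z) (hcont : ∀ n, Continuous (hseq n))
    (hconv : ∀ x, Filter.Tendsto (fun n => hseq n x) Filter.atTop (nhds (h x))) :
    h ⁻¹' A = ⋂ m, ⋃ n, ⋃ (_ : m ≤ n), hseq n ⁻¹' G m := by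
  ext x
  simp only [Set.mem_preimage, Set.mem_iInter, Set.mem_iUnion]
  constructor
  · intro hx m
    have hGm : h x ∈ G m := by
      rw [hA₁] at hx; exact Set.mem_iInter.1 hx m
    have hev : ∀ᶠ n in Filter.atTop, hseq n x ∈ G m :=
      (hconv x).eventually ((hGopen m).eventually_mem hGm)
    obtain ⟨n, hn, hnG⟩ := (hev.and (Filter.eventually_ge_atTop m)).exists
    exact ⟨n, hnG, hn⟩
  · intro hx
    rw [hA₂]
    refine Set.mem_iInter.2 fun m => ?_
    have hfreq : ∃ᶠ n in Filter.atTop, hseq n x ∈ G m := by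
      rw [Filter.frequently_atTop]
      intro a
      obtain ⟨n, hn, hna⟩ := hx (max m a)
      exact ⟨n, le_trans (le_max_right m a) hn, hGdec (le_max_left m a) hna⟩
    exact mem_closure_of_frequently_of_tendsto hfreq (hconv x)
end

section
/- Let X be a connected topological space and E be a B₁-retract of X. Then E (with the subspace topology) is a connected space. -/
theorem connected_of_b1_retract {X : Type*} [TopologicalSpace X] [ConnectedSpace X]
    (E : Set X) (hE : IsB1Retract E) : ConnectedSpace E := by
  obtain ⟨r, ⟨g, hg, hlim⟩, hr⟩ := hE
  have hne : Nonempty E := ⟨r (Classical.arbitrary X)⟩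
  have hpre : PreconnectedSpace E := by
    apply preconnectedSpace_of_forall_constant
    intro f hf a b
    -- each f ∘ g n is continuous on connected X, hence constant
    have hconst : ∀ n (x y : X), f (g n x) = f (g n y) := fun n x y =>
      PreconnectedSpace.constant inferInstance (hf.comp (hg n)) (x := x) (y := y)
    -- f (r x) is the limit of f (g n x); this limit does not depend on x
    have hlimf : ∀ x : X, Filter.Tendsto (fun n => f (g n x)) Filter.atTop (nhds (f (r x))) :=
      fun x => (hf.tendsto (r x)).comp (hlim x)
    have key : ∀ x y : X, f (r x) = f (r y) := by
      intro x y
      have h1 := hlimf x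
      have h2 : Filter.Tendsto (fun n => f (g n x)) Filter.atTop (nhds (f (r y))) := by
        have := hlimf y
        simpa only [fun n => hconst n x y] using this
      exact tendsto_nhds_unique h1 h2
    have ha : r (a : X) = a := Subtype.ext (hr a a.2)
    have hb : r (b : X) = b := Subtype.ext (hr b b.2)
    calc f a = f (r (a : X)) := by rw [ha]
      _ = f (r (b : X)) := key a b
      _ = f b := by rw [hb]
  exact { toPreconnectedSpace := hpre, toNonempty := hne }
end

section
/- Let X be a perfectly normal space and E ⊆ X be such that E with the subspace topology is an equiconnected space, E = ⋃_{n=1}^∞ E_n, and: (1) E_n ∩ E_m = ∅ for n ≠ m; (2) each E_n is simultaneously an F_σ-set and a G_δ-set in the subspace E; (3) each E_n is a B₁-retract of X; (4) E is a G_δ-set in X. Then E is a B₁-retract of X. -/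
/-- A subset of a topological space is an *Fσ-set* if it is a countable union of closed sets. -/
def IsFsigma {X : Type*} [TopologicalSpace X] (s : Set X) : Prop :=
  ∃ F : ℕ → Set X, (∀ n, IsClosed (F n)) ∧ s = ⋃ n, F n

/-- A topological space `Y` is *equiconnected* if there is a continuous map
`γ : Y × Y × [0,1] → Y` with `γ (y', y'', 0) = y'`, `γ (y', y'', 1) = y''` and
`γ (y, y, t) = y`. -/
def Equiconnected (Y : Type*) [TopologicalSpace Y] : Prop :=
  ∃ γ : Y × Y × Set.Icc (0 : ℝ) 1 → Y, Continuous γ ∧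
    (∀ y' y'', γ (y', y'', ⟨0, by norm_num⟩) = y') ∧
    (∀ y' y'', γ (y', y'', ⟨1, by norm_num⟩) = y'') ∧
    (∀ y t, γ (y, y, t) = y)

/-- Iterated application of the equiconnecting map, gluing the maps `s 0, …, s k`
with "switches" `t 0, …, t k`.  `stackAux γ s t k (j+1)` handles levels `k - j, …, k`,
with level `k - j` outermost. -/
noncomputable def stackAux {X Y : Type*} (γ : Y × Y × Set.Icc (0:ℝ) 1 → Y)
    (s : ℕ → X → Y) (t : ℕ → X → Set.Icc (0:ℝ) 1) (k : ℕ) : ℕ → X → Y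
  | 0 => s 0
  | (j+1) => fun x => γ (stackAux γ s t k j x, s (k - j) x, t (k - j) x)

lemma stackAux_continuous {X Y : Type*} [TopologicalSpace X] [TopologicalSpace Y]
    {γ : Y × Y × Set.Icc (0:ℝ) 1 → Y} (hγ : Continuous γ)
    {s : ℕ → X → Y} (hs : ∀ n, Continuous (s n))
    {t : ℕ → X → Set.Icc (0:ℝ) 1} (ht : ∀ n, Continuous (t n)) (k : ℕ) :
    ∀ j, Continuous (stackAux γ s t k j)
  | 0 => hs 0
  | (j+1) => by
      have h := stackAux_continuous hγ hs ht k j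
      exact hγ.comp (h.prodMk ((hs _).prodMk (ht _)))

lemma stackAux_eval {X Y : Type*} {γ : Y × Y × Set.Icc (0:ℝ) 1 → Y}
    (h0 : ∀ y' y'', γ (y', y'', ⟨0, by norm_num⟩) = y')
    (h1 : ∀ y' y'', γ (y', y'', ⟨1, by norm_num⟩) = y'')
    (s : ℕ → X → Y) (t : ℕ → X → Set.Icc (0:ℝ) 1) {k n : ℕ} (hnk : n ≤ k) {x : X}
    (hx1 : (t n x : ℝ) = 1) (hx0 : ∀ m, m < n → (t m x : ℝ) = 0) :
    stackAux γ s t k (k+1) x = s n x := by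
  have key : ∀ d, k - n + d ≤ k → stackAux γ s t k (k - n + d + 1) x = s n x := by
    intro d
    induction d with
    | zero =>
        intro _
        show γ (stackAux γ s t k (k - n) x, s (k - (k - n)) x, t (k - (k - n)) x) = s n x
        have hkn : k - (k - n) = n := Nat.sub_sub_self hnk
        rw [hkn]
        have ht1 : t n x = ⟨1, by norm_num⟩ := Subtype.ext hx1
        rw [ht1, h1]
    | succ d ih =>
        intro hle
        have hlt : k - (k - n + d + 1) < n := by omega
        show γ (stackAux γ s t k (k - n + d + 1) x, s (k - (k - n + d + 1)) x,
          t (k - (k - n + d + 1)) x) = s n x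
        have ht0 : t (k - (k - n + d + 1)) x = ⟨0, by norm_num⟩ :=
          Subtype.ext (hx0 _ hlt)
        rw [ht0, h0, ih (by omega)]
  have hfin := key n (by omega)
  rwa [show k - n + n = k by omega] at hfin

theorem b1_retract_of_countable_union {X : Type*} [TopologicalSpace X]
    [PerfectlyNormalSpace X] [T1Space X]
    (E : Set X) (hEequi : Equiconnected E) (En : ℕ → Set X) (hUnion : E = ⋃ n, En n)
    (hdisj : ∀ n m, n ≠ m → Disjoint (En n) (En m))
    (hambig : ∀ n, IsFsigma (Subtype.val ⁻¹' (En n) : Set E) ∧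
      IsGδ (Subtype.val ⁻¹' (En n) : Set E))
    (hretr : ∀ n, IsB1Retract (En n))
    (hGdelta : IsGδ E) :
    IsB1Retract E := by
  classical
  obtain ⟨γ, hγc, hγ0, hγ1, _hγd⟩ := hEequi
  -- the retractions and their continuous approximations
  choose rr hrrB hrrfix using hretr
  choose gs hgsc hgst using hrrB
  have hEsub : ∀ n, En n ⊆ E := by
    intro n; rw [hUnion]; exact Set.subset_iUnion En n
  -- Fσ description of the traces: closed sets in X
  have hCex : ∀ n, ∃ C : ℕ → Set X, (∀ j, IsClosed (C j)) ∧
      ∀ x, x ∈ E → (x ∈ En n ↔ ∃ j, x ∈ C j) := by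
    intro n
    obtain ⟨F, hFc, hFeq⟩ := (hambig n).1
    choose C hCc hCeq using fun j => (isClosed_induced_iff.mp (hFc j))
    refine ⟨C, hCc, fun x hx => ?_⟩
    constructor
    · intro hxn
      have hmem : (⟨x, hx⟩ : E) ∈ ⋃ j, F j := by
        rw [← hFeq]; exact hxn
      obtain ⟨j, hj⟩ := Set.mem_iUnion.mp hmem
      refine ⟨j, ?_⟩
      rw [← hCeq j] at hj
      exact hj
    · rintro ⟨j, hj⟩
      have hmem : (⟨x, hx⟩ : E) ∈ F j := by rw [← hCeq j]; exact hj
      have hx2 : (⟨x, hx⟩ : E) ∈ Subtype.val ⁻¹' (En n) := by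
        rw [hFeq]; exact Set.mem_iUnion.mpr ⟨j, hmem⟩
      exact hx2
  choose C hCc hCiff using hCex
  -- Gδ description of E
  obtain ⟨U, hUo, hUE⟩ := hGdelta.eq_iInter_nat
  have hEU : ∀ j, E ⊆ U j := fun j => by rw [hUE]; exact Set.iInter_subset U j
  -- open sets are Fσ (perfect normality)
  have hopenF : ∀ V : Set X, IsOpen V →
      ∃ M : ℕ → Set X, (∀ j, IsClosed (M j)) ∧ V = ⋃ j, M j := by
    intro V hV
    obtain ⟨W, hWo, hWe⟩ :=
      (PerfectlyNormalSpace.closed_gdelta (isClosed_compl_iff.mpr hV)).eq_iInter_nat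
    refine ⟨fun j => (W j)ᶜ, fun j => (hWo j).isClosed_compl, ?_⟩
    rw [← compl_compl V, hWe, Set.compl_iInter]
  -- the master sequence of closed sets with labels
  set K : ℕ → Set X := fun i =>
    if (Nat.unpair i).1 = 0 then (U (Nat.unpair i).2)ᶜ
    else C ((Nat.unpair i).1 - 1) (Nat.unpair i).2 with hKdef
  set lab : ℕ → ℕ := fun i => (Nat.unpair i).1 - 1 with hlabdef
  have hKc : ∀ i, IsClosed (K i) := by
    intro i
    simp only [hKdef]
    split
    · exact (hUo _).isClosed_compl
    · exact hCc _ _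
  have hcov : ∀ x, ∃ i, x ∈ K i := by
    intro x
    by_cases hx : x ∈ E
    · have hx' : x ∈ ⋃ n, En n := by rw [← hUnion]; exact hx
      obtain ⟨n, hn⟩ := Set.mem_iUnion.mp hx'
      obtain ⟨j, hj⟩ := (hCiff n x hx).mp hn
      refine ⟨Nat.pair (n+1) j, ?_⟩
      simp only [hKdef, Nat.unpair_pair]
      simp only [Nat.succ_ne_zero, if_false, Nat.add_sub_cancel]
      exact hj
    · have hx' : x ∉ ⋂ j, U j := by rw [← hUE]; exact hx
      obtain ⟨j, hj⟩ : ∃ j, x ∉ U j := by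
        by_contra h
        push_neg at h
        exact hx' (Set.mem_iInter.mpr h)
      refine ⟨Nat.pair 0 j, ?_⟩
      simp only [hKdef, Nat.unpair_pair, if_pos rfl]
      exact hj
  have htrace : ∀ i x, x ∈ K i → x ∈ E → x ∈ En (lab i) := by
    intro i x hxK hxE
    simp only [hKdef] at hxK
    by_cases h0 : (Nat.unpair i).1 = 0
    · rw [if_pos h0] at hxK
      exact absurd (hEU _ hxE) hxK
    · rw [if_neg h0] at hxK
      exact (hCiff _ x hxE).mpr ⟨_, hxK⟩
  -- least index function
  set N : X → ℕ := fun x => Nat.find (hcov x) with hNdef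
  set nn : X → ℕ := fun x => lab (N x) with hnndef
  -- Fσ descriptions of complements of the K i
  choose M hMc hMeq using fun i => hopenF (K i)ᶜ (hKc i).isOpen_compl
  -- accumulated versions
  set MA : ℕ → ℕ → Set X := fun i k => ⋃ j ∈ Finset.range (k+1), M i j with hMAdef
  have hMAc : ∀ i k, IsClosed (MA i k) :=
    fun i k => isClosed_biUnion_finset (fun j _ => hMc i j)
  have hMAsub : ∀ i k, MA i k ⊆ (K i)ᶜ := by
    intro i k x hx
    simp only [hMAdef, Set.mem_iUnion] at hx
    obtain ⟨j, _, hj⟩ := hx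
    rw [hMeq i]
    exact Set.mem_iUnion.mpr ⟨j, hj⟩
  have hMAmono : ∀ i k k', k ≤ k' → MA i k ⊆ MA i k' := by
    intro i k k' hkk' x hx
    simp only [hMAdef, Set.mem_iUnion] at hx ⊢
    obtain ⟨j, hjk, hj⟩ := hx
    exact ⟨j, Finset.mem_range.mpr (lt_of_lt_of_le (Finset.mem_range.mp hjk)
      (by omega)), hj⟩
  -- the pieces P i k
  set P : ℕ → ℕ → Set X := fun i k => K i ∩ ⋂ i' ∈ Finset.range i, MA i' k with hPdef
  have hPc : ∀ i k, IsClosed (P i k) :=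
    fun i k => (hKc i).inter (isClosed_biInter fun i' _ => hMAc i' k)
  have hPN : ∀ i k x, x ∈ P i k → N x = i := by
    intro i k x hx
    obtain ⟨hxK, hxM⟩ := hx
    simp only [Set.mem_iInter] at hxM
    rw [hNdef]
    simp only []
    rw [Nat.find_eq_iff]
    exact ⟨hxK, fun m hm hmK =>
      hMAsub m k (hxM m (Finset.mem_range.mpr hm)) hmK⟩
  have hPev : ∀ x, ∃ k0, ∀ k, k0 ≤ k → x ∈ P (N x) k := by
    intro x
    have hKNx : x ∈ K (N x) := Nat.find_spec (hcov x)
    have hnot : ∀ i', i' < N x → x ∉ K i' := fun i' h => Nat.find_min (hcov x) h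
    have hex : ∀ i', ∃ j, (i' < N x → x ∈ M i' j) := by
      intro i'
      by_cases h : i' < N x
      · have hxc : x ∈ (K i')ᶜ := hnot i' h
        rw [hMeq i'] at hxc
        obtain ⟨j, hj⟩ := Set.mem_iUnion.mp hxc
        exact ⟨j, fun _ => hj⟩
      · exact ⟨0, fun h' => absurd h' h⟩
    choose jf hjf using hex
    refine ⟨(Finset.range (N x)).sup jf, fun k hk => ?_⟩
    refine ⟨hKNx, ?_⟩
    simp only [Set.mem_iInter]
    intro i' hi'
    have hi'lt : i' < N x := Finset.mem_range.mp hi'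
    have hjle : jf i' ≤ k := le_trans (Finset.le_sup hi') hk
    simp only [hMAdef, Set.mem_iUnion]
    exact ⟨jf i', Finset.mem_range.mpr (by omega), hjf i' hi'lt⟩
  -- the closed sets approximating the pieces of the partition and their complements
  set FS : ℕ → ℕ → Set X := fun n k =>
    ⋃ i ∈ (Finset.range (k+1)).filter (fun i => lab i = n), P i k with hFSdef
  set HS : ℕ → ℕ → Set X := fun n k =>
    ⋃ i ∈ (Finset.range (k+1)).filter (fun i => lab i ≠ n), P i k with hHSdef
  have hFSc : ∀ n k, IsClosed (FS n k) :=
    fun n k => isClosed_biUnion_finset (fun i _ => hPc i k)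
  have hHSc : ∀ n k, IsClosed (HS n k) :=
    fun n k => isClosed_biUnion_finset (fun i _ => hPc i k)
  have hdisjFH : ∀ n k, Disjoint (HS n k) (FS n k) := by
    intro n k
    rw [Set.disjoint_left]
    intro x hxH hxF
    simp only [hHSdef, hFSdef, Set.mem_iUnion, Finset.mem_filter] at hxH hxF
    obtain ⟨i, ⟨_, hlabi⟩, hxi⟩ := hxH
    obtain ⟨i', ⟨_, hlabi'⟩, hxi'⟩ := hxF
    have h1 := hPN i k x hxi
    have h2 := hPN i' k x hxi'
    rw [← h1, h2] at hlabi
    exact hlabi hlabi'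
  -- Urysohn functions
  have hur : ∀ n k, ∃ f : C(X, ℝ), Set.EqOn f 0 (HS n k) ∧ Set.EqOn f 1 (FS n k) ∧
      ∀ x, f x ∈ Set.Icc (0:ℝ) 1 :=
    fun n k => exists_continuous_zero_one_of_isClosed (hHSc n k) (hFSc n k) (hdisjFH n k)
  choose φ hφ0 hφ1 hφm using hur
  -- the building blocks
  set sE : ℕ → ℕ → X → E := fun n k x => Set.inclusion (hEsub n) (gs n k x) with hsEdef
  have hsEc : ∀ n k, Continuous (sE n k) :=
    fun n k => (continuous_inclusion (hEsub n)).comp (hgsc n k)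
  set tI : ℕ → ℕ → X → Set.Icc (0:ℝ) 1 := fun n k x => ⟨φ n k x, hφm n k x⟩ with htIdef
  have htIc : ∀ n k, Continuous (tI n k) :=
    fun n k => Continuous.subtype_mk (φ n k).continuous _
  -- the approximating sequence
  set g : ℕ → X → E := fun k =>
    stackAux γ (fun n x => sE n k x) (fun n x => tI n k x) k (k+1) with hgdef
  have hgc : ∀ k, Continuous (g k) := fun k =>
    stackAux_continuous hγc (fun n => hsEc n k) (fun n => htIc n k) k (k+1)
  -- the retraction
  set r : X → E := fun x => Set.inclusion (hEsub (nn x)) (rr (nn x) x) with hrdef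
  refine ⟨r, ⟨g, hgc, ?_⟩, ?_⟩
  · -- convergence
    intro x
    obtain ⟨k0, hk0⟩ := hPev x
    have heval : ∀ k, max (max k0 (N x)) (nn x) ≤ k → g k x = sE (nn x) k x := by
      intro k hkge
      have hk0le : k0 ≤ k := le_trans (le_trans (le_max_left _ _) (le_max_left _ _)) hkge
      have hNle : N x ≤ k := le_trans (le_trans (le_max_right _ _) (le_max_left _ _)) hkge
      have hnle : nn x ≤ k := le_trans (le_max_right _ _) hkge
      have hxP : x ∈ P (N x) k := hk0 k hk0le
      have hxFS : x ∈ FS (nn x) k := by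
        simp only [hFSdef, Set.mem_iUnion, Finset.mem_filter]
        exact ⟨N x, ⟨Finset.mem_range.mpr (by omega), rfl⟩, hxP⟩
      have hxHS : ∀ m, m ≠ nn x → x ∈ HS m k := by
        intro m hm
        simp only [hHSdef, Set.mem_iUnion, Finset.mem_filter]
        exact ⟨N x, ⟨Finset.mem_range.mpr (by omega), fun h => hm h.symm⟩, hxP⟩
      have hx1 : (tI (nn x) k x : ℝ) = 1 := by
        have h := hφ1 (nn x) k hxFS
        simpa [htIdef] using h
      have hx0 : ∀ m, m < nn x → (tI m k x : ℝ) = 0 := by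
        intro m hmn
        have h := hφ0 m k (hxHS m (by omega))
        simpa [htIdef] using h
      exact stackAux_eval hγ0 hγ1 _ _ hnle hx1 hx0
    have hbase : Filter.Tendsto (fun k => sE (nn x) k x) Filter.atTop (nhds (r x)) := by
      have h1 : Filter.Tendsto (fun k => gs (nn x) k x) Filter.atTop
          (nhds (rr (nn x) x)) := hgst (nn x) x
      exact ((continuous_inclusion (hEsub (nn x))).tendsto (rr (nn x) x)).comp h1
    refine Filter.Tendsto.congr' ?_ hbase
    filter_upwards [Filter.eventually_ge_atTop (max (max k0 (N x)) (nn x))] with k hk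
    exact (heval k hk).symm
  · -- retraction property
    intro x hx
    have hxK : x ∈ K (N x) := Nat.find_spec (hcov x)
    have hxEn : x ∈ En (nn x) := htrace (N x) x hxK hx
    have hcoe : (r x : X) = (rr (nn x) x : X) := rfl
    rw [hcoe]
    exact hrrfix (nn x) x hxEn
end

section
/- Let E = ({0} × [0,1]) ∪ ⋃_{n=1}^∞ ( ({1/n} × [0,1]) ∪ ([1/(2n), 1/(2n−1)] × {1}) ∪ ([1/(2n+1), 1/(2n)] × {0}) ) ⊆ [0,1]². Then E is a B₁-retract of [0,1]². -/
/-- The "comb" set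
`E = ({0}×[0,1]) ∪ ⋃ₙ (({1/n}×[0,1]) ∪ ([1/(2n),1/(2n−1)]×{1}) ∪ ([1/(2n+1),1/(2n)]×{0}))`,
where `n` ranges over `{1, 2, 3, …}`. -/
def combSet : Set (ℝ × ℝ) :=
  ({0} ×ˢ Set.Icc (0 : ℝ) 1) ∪
    ⋃ n : ℕ, (({1 / ((n : ℝ) + 1)} ×ˢ Set.Icc (0 : ℝ) 1) ∪
      (Set.Icc (1 / (2 * ((n : ℝ) + 1))) (1 / (2 * ((n : ℝ) + 1) - 1)) ×ˢ {(1 : ℝ)}) ∪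
      (Set.Icc (1 / (2 * ((n : ℝ) + 1) + 1)) (1 / (2 * ((n : ℝ) + 1))) ×ˢ {(0 : ℝ)}))

/-!
Away from the limit segment `{0} × [0, 1]` the comb is a zigzag arc: in the `k`-th strip
`[1/(k+2), 1/(k+1)] × [0, 1]` it consists of two teeth and the horizontal segment joining them,
and the strip retracts continuously onto this piece, fixing both teeth pointwise. Gluing the
retractions of the strips `0, …, n` and pushing everything left of `1/(n+2)` horizontally onto
that tooth gives continuous maps `g n` of the plane into the comb. At a point `(x, y)` with
`x > 0` the sequence `g n (x, y)` is eventually constant, while `g n (0, y) = (1/(n+2), y)` tends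
to `(0, y)`; so the pointwise limit is a Baire-one retraction of the plane onto the comb, and it
restricts to the square.
-/

open Set Filter Topology

theorem isB1Retract_of_tendsto {X : Type*} [TopologicalSpace X] {E : Set X} (g : ℕ → X → X)
    (r : X → X) (hg : ∀ n, Continuous (g n)) (hgE : ∀ n x, g n x ∈ E) (hrE : ∀ x, r x ∈ E)
    (hlim : ∀ x, Tendsto (fun n => g n x) atTop (𝓝 (r x))) (hr : ∀ x ∈ E, r x = x) :
    IsB1Retract E :=
  ⟨fun x => ⟨r x, hrE x⟩, ⟨fun n x => ⟨g n x, hgE n x⟩, fun n => (hg n).subtype_mk _,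
    fun x => tendsto_subtype_rng.2 (hlim x)⟩, hr⟩

theorem IsB1Retract.preimage_val {X : Type*} [TopologicalSpace X] {E Q : Set X}
    (h : IsB1Retract E) (hEQ : E ⊆ Q) : IsB1Retract (Subtype.val ⁻¹' E : Set Q) := by
  obtain ⟨r, ⟨g, hg, hlim⟩, hr⟩ := h
  exact isB1Retract_of_tendsto (fun n q => ⟨g n q, hEQ (g n q).2⟩) (fun q => ⟨r q, hEQ (r q).2⟩)
    (fun n => (continuous_subtype_val.comp ((hg n).comp continuous_subtype_val)).subtype_mk _)
    (fun n q => (g n q).2) (fun q => (r q).2)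
    (fun q => by simpa only [tendsto_subtype_rng] using hlim q)
    (fun q hq => Subtype.ext (hr q hq))

noncomputable section

namespace Comb

def clampUnit (t : ℝ) : ℝ := projIcc 0 1 zero_le_one t

@[fun_prop]
lemma continuous_clampUnit : Continuous clampUnit :=
  continuous_subtype_val.comp continuous_projIcc

lemma clampUnit_mem (t : ℝ) : clampUnit t ∈ Icc 0 1 := (projIcc 0 1 zero_le_one t).2

lemma clampUnit_of_le_zero {t : ℝ} (ht : t ≤ 0) : clampUnit t = 0 := by
  simp [clampUnit, projIcc_of_le_left _ ht]

lemma clampUnit_of_one_le {t : ℝ} (ht : 1 ≤ t) : clampUnit t = 1 := by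
  simp [clampUnit, projIcc_of_right_le _ ht]

lemma clampUnit_of_mem {t : ℝ} (ht : t ∈ Icc 0 1) : clampUnit t = t := by
  simp [clampUnit, projIcc_of_mem _ ht]

lemma clampUnit_one_sub (t : ℝ) : clampUnit (1 - t) = 1 - clampUnit t := by
  rcases le_total t 0 with h | h
  · rw [clampUnit_of_le_zero h, clampUnit_of_one_le (by linarith), sub_zero]
  rcases le_total t 1 with h' | h'
  · rw [clampUnit_of_mem ⟨h, h'⟩, clampUnit_of_mem ⟨by linarith, by linarith⟩]
  · rw [clampUnit_of_one_le h', clampUnit_of_le_zero (by linarith), sub_self]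

def cap (a b h : ℝ) : Set (ℝ × ℝ) := ({a, b} : Set ℝ) ×ˢ Icc 0 1 ∪ Icc a b ×ˢ {h}

lemma cap_subset_Icc_prod {a b h : ℝ} (hab : a ≤ b) (hh : h ∈ Icc 0 1) :
    cap a b h ⊆ Icc a b ×ˢ Icc 0 1 := by
  rintro p (⟨hx | hx, hy⟩ | ⟨hx, hy⟩)
  · exact ⟨by rw [hx]; exact left_mem_Icc.2 hab, hy⟩
  · exact ⟨by rw [mem_singleton_iff.1 hx]; exact right_mem_Icc.2 hab, hy⟩
  · exact ⟨hx, by rw [mem_singleton_iff.1 hy]; exact hh⟩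

def reflectY (p : ℝ × ℝ) : ℝ × ℝ := (p.1, 1 - p.2)

lemma reflectY_reflectY (p : ℝ × ℝ) : reflectY (reflectY p) = p := by
  simp [reflectY]

lemma reflectY_mem_cap {a b h : ℝ} {p : ℝ × ℝ} :
    reflectY p ∈ cap a b h ↔ p ∈ cap a b (1 - h) := by
  simp only [cap, reflectY, mem_union, mem_prod, mem_Icc, mem_singleton_iff]
  constructor <;> rintro (⟨hx, hy⟩ | ⟨hx, hy⟩) <;> first
    | exact Or.inl ⟨hx, by constructor <;> linarith [hy.1, hy.2]⟩
    | exact Or.inr ⟨hx, by linarith⟩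

/-- A parametrization of the left, top and right sides of the unit square by `[0, 3]`,
constant outside `[0, 3]`. -/
def unitCapPath (t : ℝ) : ℝ × ℝ := (clampUnit (t - 1), clampUnit t - clampUnit (t - 2))

lemma unitCapPath_mem (t : ℝ) : unitCapPath t ∈ cap 0 1 1 := by
  unfold unitCapPath
  rcases le_total t 1 with h1 | h1
  · left
    refine ⟨Or.inl (clampUnit_of_le_zero (by linarith)), ?_⟩
    rw [clampUnit_of_le_zero (by linarith : t - 2 ≤ 0), sub_zero]
    exact clampUnit_mem t
  rcases le_total t 2 with h2 | h2
  · right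
    refine ⟨clampUnit_mem _, ?_⟩
    simp only [mem_singleton_iff]
    rw [clampUnit_of_one_le h1, clampUnit_of_le_zero (by linarith), sub_zero]
  · left
    refine ⟨Or.inr (clampUnit_of_one_le (by linarith)), ?_⟩
    rw [clampUnit_of_one_le (by linarith : 1 ≤ t)]
    obtain ⟨h0, h1⟩ := clampUnit_mem (t - 2)
    constructor <;> linarith

/-- A retraction of the plane onto the left, top and right sides of the unit square: the
bottom edge is spread over the whole path `unitCapPath`, the top edge over its top side, and
the horizontal segments in between are interpolated linearly. Clamping the height makes the
whole lines `x = 0` and `x = 1` go onto the sides, so that strips glue along them. -/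
def unitCapRetraction (p : ℝ × ℝ) : ℝ × ℝ :=
  unitCapPath ((1 - clampUnit p.2) * (3 * p.1) + clampUnit p.2 * (p.1 + 1))

lemma continuous_unitCapRetraction : Continuous unitCapRetraction := by
  unfold unitCapRetraction unitCapPath
  fun_prop

lemma unitCapRetraction_zero (y : ℝ) : unitCapRetraction (0, y) = (0, clampUnit y) := by
  obtain ⟨h0, h1⟩ := clampUnit_mem y
  simp only [unitCapRetraction, unitCapPath, mul_zero, zero_add, mul_one]
  rw [clampUnit_of_le_zero (by linarith : clampUnit y - 1 ≤ 0),
    clampUnit_of_le_zero (by linarith : clampUnit y - 2 ≤ 0), clampUnit_of_mem (clampUnit_mem y),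
    sub_zero]

lemma unitCapRetraction_one (y : ℝ) : unitCapRetraction (1, y) = (1, clampUnit y) := by
  obtain ⟨h0, h1⟩ := clampUnit_mem y
  have hparam : (1 - clampUnit y) * (3 * 1) + clampUnit y * (1 + 1) = 3 - clampUnit y := by ring
  simp only [unitCapRetraction, unitCapPath, hparam]
  rw [clampUnit_of_one_le (by linarith), clampUnit_of_one_le (by linarith),
    clampUnit_of_mem ⟨by linarith, by linarith⟩]
  ring_nf

lemma unitCapRetraction_top {u : ℝ} (hu : u ∈ Icc 0 1) : unitCapRetraction (u, 1) = (u, 1) := by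
  simp only [unitCapRetraction, unitCapPath, clampUnit_of_one_le le_rfl, sub_self, zero_mul,
    one_mul, zero_add, add_sub_cancel_right]
  rw [clampUnit_of_mem hu, clampUnit_of_one_le (by linarith [hu.1]),
    clampUnit_of_le_zero (by linarith [hu.2]), sub_zero]

def capRetraction (a b : ℝ) (p : ℝ × ℝ) : ℝ × ℝ :=
  let q := unitCapRetraction ((p.1 - a) / (b - a), p.2)
  (a + (b - a) * q.1, q.2)

lemma continuous_capRetraction (a b : ℝ) : Continuous (capRetraction a b) := by
  unfold capRetraction
  have := continuous_unitCapRetraction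
  fun_prop

lemma mem_cap_of_mem_cap_zero_one {a b h : ℝ} (hab : a ≤ b) {q : ℝ × ℝ} (hq : q ∈ cap 0 1 h) :
    (a + (b - a) * q.1, q.2) ∈ cap a b h := by
  rcases hq with ⟨hx | hx, hy⟩ | ⟨⟨hx0, hx1⟩, hy⟩
  · exact Or.inl ⟨Or.inl (by simp [hx]), hy⟩
  · exact Or.inl ⟨Or.inr (by simp [mem_singleton_iff.1 hx]), hy⟩
  · exact Or.inr ⟨⟨by nlinarith, by nlinarith⟩, hy⟩

lemma capRetraction_mem {a b : ℝ} (hab : a ≤ b) (p : ℝ × ℝ) :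
    capRetraction a b p ∈ cap a b 1 :=
  mem_cap_of_mem_cap_zero_one hab (unitCapPath_mem _)

lemma capRetraction_left (a b y : ℝ) : capRetraction a b (a, y) = (a, clampUnit y) := by
  simp [capRetraction, unitCapRetraction_zero]

lemma capRetraction_right {a b : ℝ} (hab : a ≠ b) (y : ℝ) :
    capRetraction a b (b, y) = (b, clampUnit y) := by
  simp [capRetraction, div_self (sub_ne_zero.2 hab.symm), unitCapRetraction_one]

lemma capRetraction_of_mem {a b : ℝ} (hab : a < b) {p : ℝ × ℝ} (hp : p ∈ cap a b 1) :
    capRetraction a b p = p := by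
  obtain ⟨x, y⟩ := p
  rcases hp with ⟨hx | hx, hy⟩ | ⟨⟨hx0, hx1⟩, hy⟩
  · simp only at hx hy
    rw [hx, capRetraction_left, clampUnit_of_mem hy]
  · simp only [mem_singleton_iff] at hx hy
    rw [hx, capRetraction_right hab.ne, clampUnit_of_mem hy]
  · simp only [mem_singleton_iff] at hx0 hx1 hy
    subst hy
    have hba : 0 < b - a := sub_pos.2 hab
    have hu : (x - a) / (b - a) ∈ Icc 0 1 :=
      ⟨div_nonneg (by linarith) hba.le, (div_le_one hba).2 (by linarith)⟩
    simp only [capRetraction, unitCapRetraction_top hu]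
    congr 1
    field_simp
    ring

def cupRetraction (a b : ℝ) : ℝ × ℝ → ℝ × ℝ := reflectY ∘ capRetraction a b ∘ reflectY

lemma continuous_cupRetraction (a b : ℝ) : Continuous (cupRetraction a b) := by
  have := continuous_capRetraction a b
  unfold cupRetraction reflectY
  fun_prop

lemma cupRetraction_mem {a b : ℝ} (hab : a ≤ b) (p : ℝ × ℝ) : cupRetraction a b p ∈ cap a b 0 :=
  reflectY_mem_cap.2 (by simpa using capRetraction_mem hab (reflectY p))

lemma cupRetraction_left (a b y : ℝ) : cupRetraction a b (a, y) = (a, clampUnit y) := by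
  simp [cupRetraction, reflectY, capRetraction_left, clampUnit_one_sub]

lemma cupRetraction_right {a b : ℝ} (hab : a ≠ b) (y : ℝ) :
    cupRetraction a b (b, y) = (b, clampUnit y) := by
  simp [cupRetraction, reflectY, capRetraction_right hab, clampUnit_one_sub]

lemma cupRetraction_of_mem {a b : ℝ} (hab : a < b) {p : ℝ × ℝ} (hp : p ∈ cap a b 0) :
    cupRetraction a b p = p := by
  have hp' : reflectY p ∈ cap a b 1 := reflectY_mem_cap.2 (by simpa using hp)
  simp only [cupRetraction, Function.comp_apply, capRetraction_of_mem hab hp', reflectY_reflectY]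

def tooth (k : ℕ) : ℝ := 1 / ((k : ℝ) + 1)

lemma tooth_pos (k : ℕ) : 0 < tooth k := by
  unfold tooth
  positivity

lemma tooth_le_one (k : ℕ) : tooth k ≤ 1 := by
  unfold tooth
  rw [div_le_one (by positivity)]
  simp

lemma tooth_anti : Antitone tooth := fun j k hjk => by
  unfold tooth
  gcongr

lemma tooth_succ_lt (k : ℕ) : tooth (k + 1) < tooth k := by
  unfold tooth
  gcongr
  linarith

lemma tendsto_tooth : Tendsto tooth atTop (𝓝 0) := tendsto_one_div_add_atTop_nhds_zero_nat

lemma tooth_two_mul (n : ℕ) : tooth (2 * n) = 1 / (2 * ((n : ℝ) + 1) - 1) := by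
  unfold tooth
  push_cast
  ring_nf

lemma tooth_two_mul_add_one (n : ℕ) : tooth (2 * n + 1) = 1 / (2 * ((n : ℝ) + 1)) := by
  unfold tooth
  push_cast
  ring_nf

lemma tooth_two_mul_add_two (n : ℕ) : tooth (2 * n + 1 + 1) = 1 / (2 * ((n : ℝ) + 1) + 1) := by
  unfold tooth
  push_cast
  ring_nf

def stripCap (k : ℕ) : Set (ℝ × ℝ) := cap (tooth (k + 1)) (tooth k) (if Even k then 1 else 0)

def stripRetraction (k : ℕ) : ℝ × ℝ → ℝ × ℝ :=
  if Even k then capRetraction (tooth (k + 1)) (tooth k)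
  else cupRetraction (tooth (k + 1)) (tooth k)

lemma continuous_stripRetraction (k : ℕ) : Continuous (stripRetraction k) := by
  unfold stripRetraction
  split_ifs
  exacts [continuous_capRetraction _ _, continuous_cupRetraction _ _]

lemma stripRetraction_mem (k : ℕ) (p : ℝ × ℝ) : stripRetraction k p ∈ stripCap k := by
  unfold stripRetraction stripCap
  split_ifs
  exacts [capRetraction_mem (tooth_succ_lt k).le p, cupRetraction_mem (tooth_succ_lt k).le p]

lemma stripRetraction_left (k : ℕ) (y : ℝ) :
    stripRetraction k (tooth (k + 1), y) = (tooth (k + 1), clampUnit y) := by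
  unfold stripRetraction
  split_ifs
  exacts [capRetraction_left _ _ y, cupRetraction_left _ _ y]

lemma stripRetraction_right (k : ℕ) (y : ℝ) :
    stripRetraction k (tooth k, y) = (tooth k, clampUnit y) := by
  unfold stripRetraction
  split_ifs
  exacts [capRetraction_right (tooth_succ_lt k).ne y, cupRetraction_right (tooth_succ_lt k).ne y]

lemma stripRetraction_of_mem {k : ℕ} {p : ℝ × ℝ} (hp : p ∈ stripCap k) :
    stripRetraction k p = p := by
  unfold stripRetraction stripCap at *
  split_ifs at *
  exacts [capRetraction_of_mem (tooth_succ_lt k) hp, cupRetraction_of_mem (tooth_succ_lt k) hp]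

lemma stripCap_subset (k : ℕ) : stripCap k ⊆ Icc (tooth (k + 1)) (tooth k) ×ˢ Icc 0 1 :=
  cap_subset_Icc_prod (tooth_succ_lt k).le (by split_ifs <;> simp)

lemma combSet_eq : combSet = {0} ×ˢ Icc 0 1 ∪ ⋃ k, stripCap k := by
  refine subset_antisymm (union_subset subset_union_left fun p hp => ?_)
    (union_subset subset_union_left fun p hp => ?_) <;> right
  · obtain ⟨n, (htooth | htop) | hbot⟩ := mem_iUnion.1 hp
    · exact mem_iUnion.2 ⟨n, Or.inl ⟨Or.inr htooth.1, htooth.2⟩⟩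
    · refine mem_iUnion.2 ⟨2 * n, Or.inr ?_⟩
      simpa [tooth_two_mul, tooth_two_mul_add_one] using htop
    · refine mem_iUnion.2 ⟨2 * n + 1, Or.inr ?_⟩
      simpa [tooth_two_mul_add_one, tooth_two_mul_add_two, Nat.even_add_one] using hbot
  · obtain ⟨k, ⟨hleft | hright, hy⟩ | hconn⟩ := mem_iUnion.1 hp
    · exact mem_iUnion.2 ⟨k + 1, Or.inl (Or.inl ⟨hleft, hy⟩)⟩
    · exact mem_iUnion.2 ⟨k, Or.inl (Or.inl ⟨hright, hy⟩)⟩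
    · obtain ⟨m, rfl | rfl⟩ := Nat.even_or_odd' k
      · refine mem_iUnion.2 ⟨m, Or.inl (Or.inr ?_)⟩
        simpa [tooth_two_mul, tooth_two_mul_add_one] using hconn
      · refine mem_iUnion.2 ⟨m, Or.inr ?_⟩
        simpa [tooth_two_mul_add_one, tooth_two_mul_add_two, Nat.even_add_one] using hconn

lemma stripRetraction_mem_combSet (k : ℕ) (p : ℝ × ℝ) : stripRetraction k p ∈ combSet := by
  rw [combSet_eq]
  exact Or.inr (mem_iUnion.2 ⟨k, stripRetraction_mem k p⟩)

lemma combSet_subset_square : combSet ⊆ Icc 0 1 ×ˢ Icc 0 1 := by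
  rw [combSet_eq]
  refine union_subset (prod_mono (by simp) subset_rfl) (iUnion_subset fun k => ?_)
  exact (stripCap_subset k).trans
    (prod_mono (Icc_subset_Icc (tooth_pos _).le (tooth_le_one k)) subset_rfl)

/-- The retraction of the strips `0, …, n` glued together, with everything to the left of
`tooth (n + 1)` pushed horizontally onto that tooth. -/
def combApprox : ℕ → ℝ × ℝ → ℝ × ℝ
  | 0, p => stripRetraction 0 (max p.1 (tooth 1), p.2)
  | n + 1, p =>
    if p.1 ≤ tooth (n + 1) then stripRetraction (n + 1) (max p.1 (tooth (n + 2)), p.2)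
    else combApprox n p

lemma combApprox_of_le_tooth {n : ℕ} {p : ℝ × ℝ} (hp : p.1 ≤ tooth (n + 1)) :
    combApprox n p = (tooth (n + 1), clampUnit p.2) := by
  cases n with
  | zero => rw [combApprox, max_eq_right hp, stripRetraction_left]
  | succ n =>
    rw [combApprox, if_pos (hp.trans (tooth_succ_lt _).le), max_eq_right hp, stripRetraction_left]

lemma combApprox_succ_of_tooth_le {n : ℕ} {p : ℝ × ℝ} (hp : tooth (n + 1) ≤ p.1) :
    combApprox (n + 1) p = combApprox n p := by
  rw [combApprox]
  split_ifs with h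
  · rw [combApprox_of_le_tooth h, le_antisymm h hp, max_eq_left (tooth_succ_lt _).le,
      stripRetraction_right]
  · rfl

lemma continuous_combApprox (n : ℕ) : Continuous (combApprox n) := by
  induction n with
  | zero => exact (continuous_stripRetraction 0).comp (by fun_prop)
  | succ n ih =>
    have h := continuous_stripRetraction (n + 1)
    refine Continuous.if_le (by fun_prop) ih continuous_fst continuous_const fun p hp => ?_
    rw [combApprox_of_le_tooth hp.le, hp, max_eq_left (tooth_succ_lt _).le, stripRetraction_right]

lemma combApprox_mem_combSet (n : ℕ) (p : ℝ × ℝ) : combApprox n p ∈ combSet := by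
  induction n with
  | zero => exact stripRetraction_mem_combSet _ _
  | succ n ih =>
    rw [combApprox]
    split_ifs
    exacts [stripRetraction_mem_combSet _ _, ih]

lemma combApprox_eq_of_le {m n : ℕ} (hmn : m ≤ n) {p : ℝ × ℝ} (hp : tooth (m + 1) ≤ p.1) :
    combApprox n p = combApprox m p := by
  induction n, hmn using Nat.le_induction with
  | base => rfl
  | succ n hmn ih => rw [combApprox_succ_of_tooth_le ((tooth_anti (by omega)).trans hp), ih]

lemma combApprox_of_mem_strip {k : ℕ} {p : ℝ × ℝ} (h1 : tooth (k + 1) ≤ p.1) (h2 : p.1 ≤ tooth k) :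
    combApprox k p = stripRetraction k p := by
  cases k with
  | zero => rw [combApprox, max_eq_left h1]
  | succ k => rw [combApprox, if_pos h2, max_eq_left h1]

lemma tooth_floor_inv_le {x : ℝ} (hx : 0 < x) : tooth ⌊x⁻¹⌋₊ ≤ x := by
  unfold tooth
  rw [one_div_le (by positivity) hx, one_div]
  exact (Nat.lt_floor_add_one _).le

def combRetraction (p : ℝ × ℝ) : ℝ × ℝ :=
  if p.1 ≤ 0 then (0, clampUnit p.2) else combApprox ⌊p.1⁻¹⌋₊ p

lemma combRetraction_mem_combSet (p : ℝ × ℝ) : combRetraction p ∈ combSet := by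
  unfold combRetraction
  split_ifs
  exacts [Or.inl ⟨rfl, clampUnit_mem _⟩, combApprox_mem_combSet _ _]

lemma eventually_combApprox_eq {p : ℝ × ℝ} (hp : 0 < p.1) :
    ∀ᶠ n in atTop, combApprox n p = combRetraction p := by
  rw [combRetraction, if_neg hp.not_ge]
  exact eventually_atTop.2 ⟨_, fun n hn =>
    combApprox_eq_of_le hn ((tooth_anti (Nat.le_succ _)).trans (tooth_floor_inv_le hp))⟩

lemma tendsto_combApprox (p : ℝ × ℝ) :
    Tendsto (fun n => combApprox n p) atTop (𝓝 (combRetraction p)) := by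
  rcases le_or_gt p.1 0 with hp | hp
  · have hn (n : ℕ) : combApprox n p = (tooth (n + 1), clampUnit p.2) :=
      combApprox_of_le_tooth (hp.trans (tooth_pos _).le)
    simp only [hn, combRetraction, if_pos hp]
    exact (tendsto_tooth.comp (tendsto_add_atTop_nat 1)).prodMk_nhds tendsto_const_nhds
  · exact tendsto_const_nhds.congr' (EventuallyEq.symm (eventually_combApprox_eq hp))

lemma combRetraction_of_mem {p : ℝ × ℝ} (hp : p ∈ combSet) : combRetraction p = p := by
  rw [combSet_eq] at hp
  rcases hp with ⟨hx, hy⟩ | hp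
  · rw [mem_singleton_iff] at hx
    rw [combRetraction, if_pos hx.le, clampUnit_of_mem hy, ← hx]
  · obtain ⟨k, hk⟩ := mem_iUnion.1 hp
    obtain ⟨⟨h1, h2⟩, -⟩ := stripCap_subset k hk
    obtain ⟨n, hn, hkn⟩ :=
      ((eventually_combApprox_eq ((tooth_pos _).trans_le h1)).and (eventually_ge_atTop k)).exists
    rw [← hn, combApprox_eq_of_le hkn h1, combApprox_of_mem_strip h1 h2, stripRetraction_of_mem hk]

end Comb

end

open Comb in
theorem isB1Retract_combSet : IsB1Retract combSet :=
  isB1Retract_of_tendsto combApprox combRetraction continuous_combApprox combApprox_mem_combSet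
    combRetraction_mem_combSet tendsto_combApprox fun _ => combRetraction_of_mem

theorem combSet_isB1Retract :
    IsB1Retract (Subtype.val ⁻¹' combSet :
      Set (Set.Icc (0 : ℝ) 1 ×ˢ Set.Icc (0 : ℝ) 1 : Set (ℝ × ℝ))) :=
  isB1Retract_combSet.preimage_val Comb.combSet_subset_square
end

section
/- Let (q_n)_{n≥1} be an enumeration (a bijection from ℕ) of ℚ ∩ [0,1]. For each n define f_n : [0,1] → [−1,1] by f_n(x) = sin(1/(x − q_n)) for x ≠ q_n and f_n(q_n) = 0, and let f(x) = Σ_{n=1}^∞ 2^{−n} f_n(x). Then f is a Baire-one function from [0,1] to [−1,1] that is discontinuous at every point of ℚ ∩ [0,1]. -/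
open Filter Real Set Topology

lemma hasSum_half_pow_succ : HasSum (fun n : ℕ => (1 / 2 : ℝ) ^ (n + 1)) 1 :=
  (hasSum_geometric_two' 1).congr_fun fun n => by rw [one_div_pow, div_div, pow_succ']

lemma norm_half_pow_succ_mul_le {g : ℝ} (hg : ‖g‖ ≤ 1) (n : ℕ) :
    ‖(1 / 2 : ℝ) ^ (n + 1) * g‖ ≤ (1 / 2) ^ (n + 1) := by
  rw [norm_mul, norm_of_nonneg (by positivity)]
  exact mul_le_of_le_one_right (by positivity) hg

lemma norm_tsum_half_pow_succ_mul_le_one {g : ℕ → ℝ} (hg : ∀ n, ‖g n‖ ≤ 1) :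
    ‖∑' n, (1 / 2 : ℝ) ^ (n + 1) * g n‖ ≤ 1 :=
  tsum_of_norm_bounded hasSum_half_pow_succ fun n => norm_half_pow_succ_mul_le (hg n) n

lemma continuousAt_tsum {α X F : Type*} [TopologicalSpace X] [NormedAddCommGroup F]
    [CompleteSpace F] {f : α → X → F} {u : α → ℝ} {x : X} (hf : ∀ n, ContinuousAt (f n) x)
    (hu : Summable u) (hfu : ∀ n y, ‖f n y‖ ≤ u n) :
    ContinuousAt (fun y => ∑' n, f n y) x := by
  refine continuousAt_of_locally_uniform_approx_of_continuousAt fun v hv => ?_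
  obtain ⟨t, ht⟩ := (tendstoUniformly_tsum hu hfu v hv).exists
  exact ⟨univ, univ_mem, _, tendsto_finsetSum t fun n _ => hf n, fun y _ => ht y⟩

lemma not_tendsto_sin_atTop (c : ℝ) : ¬ Tendsto sin atTop (𝓝 c) := by
  intro h
  have along (x₀ : ℝ) : Tendsto (fun k : ℕ => sin (x₀ + k * (2 * π))) atTop (𝓝 c) :=
    h.comp <| tendsto_atTop_add_const_left _ _ <|
      tendsto_natCast_atTop_atTop.atTop_mul_const two_pi_pos
  have h₁ := along (π / 2)
  have h₂ := along (-(π / 2))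
  simp only [sin_add_nat_mul_two_pi, sin_neg, sin_pi_div_two] at h₁ h₂
  have := (tendsto_const_nhds_iff.mp h₁).trans (tendsto_const_nhds_iff.mp h₂).symm
  norm_num at this

lemma not_tendsto_sin_atBot (c : ℝ) : ¬ Tendsto sin atBot (𝓝 c) := fun h =>
  not_tendsto_sin_atTop (-c) <| by
    simpa [Function.comp_def] using (h.comp tendsto_neg_atTop_atBot).neg

lemma not_tendsto_sin_one_div_sub_nhdsGT (a L : ℝ) :
    ¬ Tendsto (fun x => sin (1 / (x - a))) (𝓝[>] a) (𝓝 L) := fun h =>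
  have shift : Tendsto (fun y : ℝ => a + y⁻¹) atTop (𝓝[>] a) :=
    tendsto_nhdsWithin_iff.2 ⟨by simpa using tendsto_inv_atTop_zero.const_add a,
      (eventually_gt_atTop 0).mono fun y hy => by simpa using hy⟩
  not_tendsto_sin_atTop L <| by simpa [Function.comp_def] using h.comp shift

lemma not_tendsto_sin_one_div_sub_nhdsLT (a L : ℝ) :
    ¬ Tendsto (fun x => sin (1 / (x - a))) (𝓝[<] a) (𝓝 L) := fun h =>
  have shift : Tendsto (fun y : ℝ => a + y⁻¹) atBot (𝓝[<] a) :=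
    tendsto_nhdsWithin_iff.2 ⟨by simpa using tendsto_inv_atBot_zero.const_add a,
      (eventually_lt_atBot 0).mono fun y hy => by simpa using hy⟩
  not_tendsto_sin_atBot L <| by simpa [Function.comp_def] using h.comp shift

lemma not_continuousWithinAt_sin_one_div_sub_Icc {a b c : ℝ} (hbc : b < c) (ha : a ∈ Icc b c) :
    ¬ ContinuousWithinAt (fun x => sin (1 / (x - a))) (Icc b c) a := by
  intro h
  rcases ha.2.lt_or_eq with hac | rfl
  · exact not_tendsto_sin_one_div_sub_nhdsGT a _ <|
      h.tendsto.mono_left (nhdsWithin_le_of_mem (Icc_mem_nhdsGT_of_mem ⟨ha.1, hac⟩))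
  · exact not_tendsto_sin_one_div_sub_nhdsLT _ _ <|
      h.tendsto.mono_left (nhdsWithin_le_of_mem (Icc_mem_nhdsLT_of_mem ⟨hbc, le_rfl⟩))

lemma continuousAt_sin_one_div_sub {a x : ℝ} (hx : x ≠ a) :
    ContinuousAt (fun y => sin (1 / (y - a))) x := by
  fun_prop (disch := exact sub_ne_zero.2 hx)

noncomputable def dampedSin (a : ℝ) (k : ℕ) (x : ℝ) : ℝ :=
  sin (1 / (x - a)) * min 1 (k * |x - a|)

lemma norm_dampedSin_le (a : ℝ) (k : ℕ) (x : ℝ) : ‖dampedSin a k x‖ ≤ min 1 (k * |x - a|) := by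
  have hmin : 0 ≤ min 1 (k * |x - a|) := by positivity
  rw [dampedSin, norm_mul, norm_of_nonneg hmin]
  exact mul_le_of_le_one_left hmin (abs_sin_le_one _)

lemma continuous_dampedSin (a : ℝ) (k : ℕ) : Continuous (dampedSin a k) := by
  refine continuous_iff_continuousAt.2 fun x => ?_
  rcases eq_or_ne x a with rfl | hx
  · have hlim : Tendsto (fun y => k * |y - x|) (𝓝 x) (𝓝 0) := by
      simpa using ((continuous_sub_right x).abs.const_mul (k : ℝ)).tendsto x
    simpa [ContinuousAt, dampedSin] using
      squeeze_zero_norm (fun y => (norm_dampedSin_le x k y).trans (min_le_right _ _)) hlim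
  · exact (continuousAt_sin_one_div_sub hx).mul (by fun_prop)

lemma tendsto_dampedSin (a x : ℝ) :
    Tendsto (fun k => dampedSin a k x) atTop (𝓝 (sin (1 / (x - a)))) := by
  rcases eq_or_ne x a with rfl | hx
  · simp [dampedSin]
  have hgrow := tendsto_natCast_atTop_atTop.atTop_mul_const (abs_pos.2 (sub_ne_zero.2 hx))
  refine tendsto_const_nhds.congr' ?_
  filter_upwards [hgrow.eventually_ge_atTop 1] with k hk
  rw [dampedSin, min_eq_left hk, mul_one]

section

variable (q : ℕ → ℝ)

lemma continuous_tsum_dampedSin (k : ℕ) :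
    Continuous fun x => ∑' n, (1 / 2 : ℝ) ^ (n + 1) * dampedSin (q n) k x :=
  continuous_tsum (fun _ => continuous_const.mul (continuous_dampedSin _ _))
    hasSum_half_pow_succ.summable
    fun _ _ => norm_half_pow_succ_mul_le ((norm_dampedSin_le _ _ _).trans (min_le_left _ _)) _

lemma tendsto_tsum_dampedSin (x : ℝ) :
    Tendsto (fun k => ∑' n, (1 / 2 : ℝ) ^ (n + 1) * dampedSin (q n) k x) atTop
      (𝓝 (∑' n, (1 / 2 : ℝ) ^ (n + 1) * sin (1 / (x - q n)))) :=
  tendsto_tsum_of_dominated_convergence hasSum_half_pow_succ.summable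
    (fun _ => (tendsto_dampedSin _ _).const_mul _)
    (Eventually.of_forall fun _ _ =>
      norm_half_pow_succ_mul_le ((norm_dampedSin_le _ _ _).trans (min_le_left _ _)) _)

lemma not_continuousWithinAt_tsum_sin_one_div_sub (hq : Function.Injective q) {b c : ℝ}
    (hbc : b < c) {m : ℕ} (hm : q m ∈ Icc b c) :
    ¬ ContinuousWithinAt (fun x => ∑' n, (1 / 2 : ℝ) ^ (n + 1) * sin (1 / (x - q n)))
      (Icc b c) (q m) := by
  intro h
  set w : ℝ := (1 / 2) ^ (m + 1)
  set r : ℝ → ℝ := fun x => ∑' n, if n = m then 0 else (1 / 2) ^ (n + 1) * sin (1 / (x - q n))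
  have hr : ContinuousAt r (q m) := by
    refine continuousAt_tsum (fun n => ?_) hasSum_half_pow_succ.summable fun n x => ?_
    · split_ifs with hnm
      · exact continuousAt_const
      · exact continuousAt_const.mul
          (continuousAt_sin_one_div_sub fun h => hnm (hq h).symm)
    · split_ifs
      · simp only [norm_zero]; positivity
      · exact norm_half_pow_succ_mul_le (abs_sin_le_one _) n
  have hsplit (x : ℝ) : (∑' n, (1 / 2 : ℝ) ^ (n + 1) * sin (1 / (x - q n))) =
      w * sin (1 / (x - q m)) + r x :=
    (hasSum_half_pow_succ.summable.of_norm_bounded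
      fun n => norm_half_pow_succ_mul_le (abs_sin_le_one _) n).tsum_eq_add_tsum_ite m
  have hsin : (fun x => sin (1 / (x - q m))) =
      fun x => w⁻¹ * ((∑' n, (1 / 2 : ℝ) ^ (n + 1) * sin (1 / (x - q n))) - r x) := by
    funext x
    rw [hsplit, add_sub_cancel_right, inv_mul_cancel_left₀ (by positivity)]
  refine not_continuousWithinAt_sin_one_div_sub_Icc hbc hm ?_
  rw [hsin]
  exact continuousWithinAt_const.mul (h.sub hr.continuousWithinAt)

end

lemma isBaireOne_codRestrict {X Y : Type*} [TopologicalSpace X] [TopologicalSpace Y] {s : Set Y}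
    {g : ℕ → X → Y} {f : X → Y} (hg : ∀ k, Continuous (g k)) (hgs : ∀ k x, g k x ∈ s)
    (hfs : ∀ x, f x ∈ s) (hlim : ∀ x, Tendsto (fun k => g k x) atTop (𝓝 (f x))) :
    IsBaireOne (s.codRestrict f hfs) :=
  ⟨fun k => s.codRestrict (g k) (hgs k), fun k => (hg k).codRestrict _,
    fun x => tendsto_subtype_rng.2 (hlim x)⟩

theorem sum_of_sin_baire_one_discontinuous_on_rationals
    (q : ℕ → ℝ) (hq_inj : Function.Injective q)
    (hq_range : Set.range q = {x : ℝ | x ∈ Set.Icc (0 : ℝ) 1 ∧ ∃ p : ℚ, (p : ℝ) = x})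
    (f : ℝ → ℝ)
    (hf : ∀ x : ℝ, f x =
      ∑' n : ℕ, (1 / 2 : ℝ) ^ (n + 1) * (if x = q n then 0 else Real.sin (1 / (x - q n)))) :
    ∃ F : Set.Icc (0 : ℝ) 1 → Set.Icc (-1 : ℝ) 1,
      (∀ x : Set.Icc (0 : ℝ) 1, (F x : ℝ) = f x) ∧
      IsBaireOne F ∧
      ∀ x : Set.Icc (0 : ℝ) 1, (∃ p : ℚ, (p : ℝ) = (x : ℝ)) → ¬ ContinuousAt F x := by
  -- `1 / 0 = 0` and `sin 0 = 0`, so the case split in `hf` is built into `sin (1 / (x - a))`.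
  have hf' : f = fun x => ∑' n, (1 / 2 : ℝ) ^ (n + 1) * sin (1 / (x - q n)) :=
    funext fun x => (hf x).trans <| tsum_congr fun n => by split_ifs with h <;> simp [h]
  have hmem {g : ℕ → ℝ} (hg : ∀ n, ‖g n‖ ≤ 1) : ∑' n, (1 / 2 : ℝ) ^ (n + 1) * g n ∈ Icc (-1) 1 :=
    abs_le.1 (norm_tsum_half_pow_succ_mul_le_one hg)
  have hf_mem (x : ℝ) : f x ∈ Icc (-1) 1 := hf' ▸ hmem fun _ => abs_sin_le_one _
  refine ⟨codRestrict (fun x : Icc (0 : ℝ) 1 => f x) _ fun x => hf_mem x, fun _ => rfl, ?_, ?_⟩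
  · refine isBaireOne_codRestrict
      (fun k => (continuous_tsum_dampedSin q k).comp continuous_subtype_val)
      (fun _ _ => hmem fun _ => (norm_dampedSin_le _ _ _).trans (min_le_left _ _)) _ fun x => ?_
    rw [hf']
    exact tendsto_tsum_dampedSin q x
  · rintro x ⟨p, hp⟩ hF
    obtain ⟨m, hm⟩ : (x : ℝ) ∈ range q := hq_range ▸ ⟨x.2, p, hp⟩
    have hcont : ContinuousWithinAt f (Icc 0 1) (q m) := hm ▸
      (continuousWithinAt_iff_continuousAt_domRestrict f x.2).2
        (continuous_subtype_val.continuousAt.comp hF)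
    exact not_continuousWithinAt_tsum_sin_one_div_sub q hq_inj zero_lt_one (hm ▸ x.2) (hf' ▸ hcont)
end

section
/- Let (q_n)_{n≥1} be an enumeration of ℚ ∩ [0,1]. For each n define f_n : [0,1] → [−1,1] by f_n(x) = sin(1/(x − q_n)) for x ≠ q_n and f_n(q_n) = 0, and let f(x) = Σ_{n=1}^∞ 2^{−n} f_n(x). Then the graph E = {(x, f(x)) : x ∈ [0,1]} is a G_δ-set in X = [0,1] × [−1,1]. -/
open Set Filter Topology

theorem graph_of_sum_of_sin_isGdelta
    (q : ℕ → ℝ) (hq_inj : Function.Injective q)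
    (hq_range : Set.range q = {x : ℝ | x ∈ Set.Icc (0 : ℝ) 1 ∧ ∃ p : ℚ, (p : ℝ) = x})
    (f : ℝ → ℝ)
    (hf : ∀ x : ℝ, f x =
      ∑' n : ℕ, (1 / 2 : ℝ) ^ (n + 1) * (if x = q n then 0 else Real.sin (1 / (x - q n)))) :
    IsGδ {p : (Set.Icc (0 : ℝ) 1 ×ˢ Set.Icc (-1 : ℝ) 1 : Set (ℝ × ℝ)) |
      (p : ℝ × ℝ).2 = f (p : ℝ × ℝ).1} := by
  classical
  set g : ℕ → ℝ → ℝ :=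
    fun n x => (1 / 2 : ℝ) ^ (n + 1) * (if x = q n then 0 else Real.sin (1 / (x - q n))) with hg
  have hfg : ∀ x, f x = ∑' n, g n x := by
    intro x; simp only [hg]; exact hf x
  have hu : Summable (fun n : ℕ => (1 / 2 : ℝ) ^ (n + 1)) := by
    have h := (summable_geometric_of_lt_one (by norm_num : (0:ℝ) ≤ 1/2) (by norm_num)).mul_right
      (1/2 : ℝ)
    simpa [pow_succ] using h
  have hb : ∀ n x, ‖g n x‖ ≤ (1 / 2 : ℝ) ^ (n + 1) := by
    intro n x
    have h1 : |(if x = q n then (0:ℝ) else Real.sin (1 / (x - q n)))| ≤ 1 := by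
      split
      · norm_num
      · exact Real.abs_sin_le_one _
    have hp : (0:ℝ) ≤ (1/2:ℝ)^(n+1) := by positivity
    calc ‖g n x‖ = (1/2:ℝ)^(n+1) * |(if x = q n then (0:ℝ) else Real.sin (1 / (x - q n)))| := by
          simp only [hg, Real.norm_eq_abs, abs_mul, abs_pow]
          norm_num
      _ ≤ (1/2:ℝ)^(n+1) * 1 := by gcongr
      _ = (1/2:ℝ)^(n+1) := mul_one _
  have husum : ∑' n : ℕ, (1 / 2 : ℝ) ^ (n + 1) = 1 := by
    have h2 : ∑' n : ℕ, (1/2:ℝ)^n = 2 := by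
      rw [tsum_geometric_of_lt_one (by norm_num) (by norm_num)]; norm_num
    calc ∑' n : ℕ, (1 / 2 : ℝ) ^ (n + 1) = ∑' n : ℕ, (1/2:ℝ)^n * (1/2) := by
          simp [pow_succ]
      _ = (∑' n : ℕ, (1/2:ℝ)^n) * (1/2) := tsum_mul_right
      _ = 1 := by rw [h2]; norm_num
  have hfb : ∀ x, f x ∈ Set.Icc (-1:ℝ) 1 := by
    intro x
    have hs : Summable (fun n => ‖g n x‖) :=
      Summable.of_nonneg_of_le (fun n => norm_nonneg _) (fun n => hb n x) hu
    have h1 : ‖f x‖ ≤ 1 := by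
      rw [hfg x]
      calc ‖∑' n, g n x‖ ≤ ∑' n, ‖g n x‖ := norm_tsum_le_tsum_norm hs
        _ ≤ ∑' n : ℕ, (1 / 2 : ℝ) ^ (n + 1) := Summable.tsum_le_tsum (fun n => hb n x) hs hu
        _ = 1 := husum
    rw [Real.norm_eq_abs, abs_le] at h1
    exact ⟨h1.1, h1.2⟩
  have hcont : ∀ x : ℝ, (∀ n, x ≠ q n) → ContinuousAt f x := by
    intro x hx
    have hgc : ∀ n, ContinuousAt (g n) x := by
      intro n
      have hne : x - q n ≠ 0 := sub_ne_zero.mpr (hx n)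
      have hco : ContinuousAt (fun y => (1/2:ℝ)^(n+1) * Real.sin (1 / (y - q n))) x := by
        refine continuousAt_const.mul (Real.continuous_sin.continuousAt.comp ?_)
        exact continuousAt_const.div ((continuous_id.sub continuous_const).continuousAt) hne
      refine hco.congr ?_
      filter_upwards [isOpen_ne.mem_nhds (hx n)] with y hy
      simp only [hg, if_neg hy]
    have hc : ContinuousAt (fun y => ∑' n, g n y) x := by
      refine continuousAt_of_locally_uniform_approx_of_continuousAt ?_
      intro u hu'
      obtain ⟨s, hs⟩ := ((tendstoUniformly_tsum hu hb) u hu').exists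
      refine ⟨Set.univ, univ_mem, (fun y => ∑ n ∈ s, g n y), ?_, fun y _ => hs y⟩
      exact tendsto_finset_sum s (fun i _ => hgc i)
    have : f = fun y => ∑' n, g n y := funext hfg
    rw [this]
    exact hc
  set E := {p : (Set.Icc (0 : ℝ) 1 ×ˢ Set.Icc (-1 : ℝ) 1 : Set (ℝ × ℝ)) |
      (p : ℝ × ℝ).2 = f (p : ℝ × ℝ).1} with hE
  have hq1 : ∀ n, q n ∈ Set.Icc (0:ℝ) 1 := by
    intro n
    have : q n ∈ Set.range q := Set.mem_range_self n
    rw [hq_range] at this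
    exact this.1
  set P : ℕ → (Set.Icc (0 : ℝ) 1 ×ˢ Set.Icc (-1 : ℝ) 1 : Set (ℝ × ℝ)) :=
    fun n => ⟨(q n, f (q n)), Set.mk_mem_prod (hq1 n) (hfb (q n))⟩ with hP
  have hPE : ∀ n, P n ∈ E := fun n => rfl
  have key : E = ⋂ n, ((closure E ∩ {z | (z : ℝ × ℝ).1 ≠ q n}) ∪ {P n}) := by
    ext z
    constructor
    · intro hz
      refine Set.mem_iInter.2 fun n => ?_
      by_cases h : (z : ℝ × ℝ).1 = q n
      · right
        refine Set.mem_singleton_iff.2 (Subtype.ext (Prod.ext h ?_))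
        have := hz
        rw [Set.mem_setOf_eq] at this
        rw [this, h]
      · exact Or.inl ⟨subset_closure hz, h⟩
    · intro hz
      by_cases hzq : ∃ n, (z : ℝ × ℝ).1 = q n
      · obtain ⟨n, hn⟩ := hzq
        rcases Set.mem_iInter.1 hz n with h | h
        · exact absurd hn h.2
        · rw [Set.mem_singleton_iff.1 h]
          exact hPE n
      · push_neg at hzq
        have hcl : z ∈ closure E := by
          rcases Set.mem_iInter.1 hz 0 with h | h
          · exact h.1
          · rw [Set.mem_singleton_iff.1 h]
            exact subset_closure (hPE 0)
        obtain ⟨w, hwE, hwz⟩ := mem_closure_iff_seq_limit.1 hcl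
        have hv : Tendsto (fun k => (w k : ℝ × ℝ)) atTop (𝓝 (z : ℝ × ℝ)) :=
          (continuous_subtype_val.continuousAt.tendsto).comp hwz
        have h1 : Tendsto (fun k => (w k : ℝ × ℝ).1) atTop (𝓝 (z : ℝ × ℝ).1) :=
          (continuous_fst.continuousAt.tendsto).comp hv
        have h2 : Tendsto (fun k => (w k : ℝ × ℝ).2) atTop (𝓝 (z : ℝ × ℝ).2) :=
          (continuous_snd.continuousAt.tendsto).comp hv
        have h3 : Tendsto (fun k => f ((w k : ℝ × ℝ)).1) atTop (𝓝 (f (z : ℝ × ℝ).1)) :=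
          ((hcont _ hzq).tendsto).comp h1
        have h4 : (fun k => f ((w k : ℝ × ℝ)).1) = fun k => ((w k : ℝ × ℝ)).2 :=
          funext fun k => (hwE k).symm
        show (z : ℝ × ℝ).2 = f (z : ℝ × ℝ).1
        exact tendsto_nhds_unique h2 (h4 ▸ h3)
  rw [key]
  refine IsGδ.iInter fun n => IsGδ.union ?_ (IsGδ.singleton _)
  refine IsGδ.inter isClosed_closure.isGδ (IsOpen.isGδ ?_)
  exact IsOpen.preimage (continuous_fst.comp continuous_subtype_val) isOpen_ne
end
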